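/- arXiv:0806.0955 — 3 statements merged into one kernel-verified Lean document; each statement's English description precedes it below -/
import Mathlib

section
/- Let F : ℝ → ℝ be continuous with F(0) = 0, satisfying: for each c > 0 there exist 0 < r₁ < r₂ with F⁺(s) ≤ c|s|^{p*} for |s| ≤ r₁ or |s| ≥ r₂. Let (u_h) be a sequence bounded in L^{p*}(ℝⁿ) with F(u_h) ∈ L¹(ℝⁿ) and ∫ F(u_h) = 1 for all h, and suppose u_h → u a.e. Then F⁺(u) ∈ L¹(ℝⁿ) and F⁻(u) ∈ L¹(ℝⁿ), hence F(u) ∈ L¹(ℝⁿ). -/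
open MeasureTheory Filter Topology
open scoped ENNReal NNReal

/-! Taking `c = 1` in the growth condition and bounding the continuous `F` on `[-r₂, r₂]`
gives `F s ≤ K |s| ^ p*` for all `s`, since `|s| ^ p* ≥ r₁ ^ p*` on the annulus `r₁ < |s| < r₂`. Hence `∫ F⁺(v) ≤ K C ^ p*` for every
`v` in the `L^{p*}`-ball of radius `C`, in particular for `u` (by lower semicontinuity of the
norm). Since `∫ F(u_h) = 1 ≥ 0`, also `∫ F⁻(u_h) ≤ ∫ F⁺(u_h) ≤ K C ^ p*`, and Fatou's lemma
carries this bound to `F⁻(u)`. -/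

theorem Continuous.exists_le_mul_rpow_abs {G : ℝ → ℝ} (hG : Continuous G) {q r₁ r₂ : ℝ}
    (hq : 0 ≤ q) (hr₁ : 0 < r₁) (hG_le : ∀ s, (|s| ≤ r₁ ∨ r₂ ≤ |s|) → G s ≤ |s| ^ q) :
    ∃ K : ℝ≥0, ∀ s, G s ≤ K * |s| ^ q := by
  obtain ⟨β, hβ⟩ := (isCompact_Icc (a := -r₂) (b := r₂)).bddAbove_image hG.continuousOn
  set K : ℝ≥0 := max 1 (β / r₁ ^ q).toNNReal
  refine ⟨K, fun s => ?_⟩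
  have hs : 0 ≤ |s| ^ q := by positivity
  by_cases hs_out : |s| ≤ r₁ ∨ r₂ ≤ |s|
  · calc G s ≤ |s| ^ q := hG_le s hs_out
      _ ≤ K * |s| ^ q := le_mul_of_one_le_left hs (by exact_mod_cast le_max_left _ _)
  · rw [not_or, not_le, not_le] at hs_out
    have hr₁q : 0 < r₁ ^ q := by positivity
    calc G s ≤ β := hβ ⟨s, abs_le.mp hs_out.2.le, rfl⟩
      _ = β / r₁ ^ q * r₁ ^ q := (div_mul_cancel₀ β hr₁q.ne').symm
      _ ≤ (β / r₁ ^ q).toNNReal * |s| ^ q := by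
        gcongr
        · exact Real.le_coe_toNNReal _
        · exact hs_out.1.le
      _ ≤ K * |s| ^ q := by gcongr; exact_mod_cast le_max_right _ _

section Integration

variable {α : Type*} [MeasurableSpace α] {μ : Measure α}

theorem lintegral_ofReal_comp_le_mul_eLpNorm_rpow {G : ℝ → ℝ} {K : ℝ≥0} {q : ℝ} (hq : 0 < q)
    (hG : ∀ s, G s ≤ K * |s| ^ q) (v : α → ℝ) :
    ∫⁻ x, ENNReal.ofReal (G (v x)) ∂μ ≤ K * eLpNorm v (ENNReal.ofReal q) μ ^ q := by
  rw [eLpNorm_eq_lintegral_rpow_enorm_toReal (by simpa using hq) ENNReal.ofReal_ne_top,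
    ENNReal.toReal_ofReal hq.le, ← ENNReal.rpow_mul, one_div_mul_cancel hq.ne', ENNReal.rpow_one,
    ← lintegral_const_mul' _ _ ENNReal.coe_ne_top]
  refine lintegral_mono fun x => (ENNReal.ofReal_le_ofReal (hG (v x))).trans_eq ?_
  rw [ENNReal.ofReal_mul K.coe_nonneg, ENNReal.ofReal_coe_nnreal, Real.enorm_eq_ofReal_abs,
    ENNReal.ofReal_rpow_of_nonneg (abs_nonneg _) hq.le]

theorem lintegral_ofReal_neg_le_of_integral_nonneg {f : α → ℝ} (hf : Integrable f μ)
    (h : 0 ≤ ∫ x, f x ∂μ) :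
    ∫⁻ x, ENNReal.ofReal (-f x) ∂μ ≤ ∫⁻ x, ENNReal.ofReal (f x) ∂μ := by
  have lintegral_ne_top {g : α → ℝ} (hg : Integrable g μ) : ∫⁻ x, ENNReal.ofReal (g x) ∂μ ≠ ∞ :=
    ((lintegral_ofReal_le_lintegral_enorm g).trans_lt hg.2).ne
  rw [integral_eq_lintegral_pos_part_sub_lintegral_neg_part hf, sub_nonneg] at h
  exact (ENNReal.toReal_le_toReal (lintegral_ne_top hf.neg) (lintegral_ne_top hf)).mp h

theorem lintegral_le_of_tendsto_ae {ι : Type*} {l : Filter ι} [l.IsCountablyGenerated] [l.NeBot]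
    {f : ι → α → ℝ≥0∞} {g : α → ℝ≥0∞} {M : ℝ≥0∞} (hf : ∀ i, AEMeasurable (f i) μ)
    (hlim : ∀ᵐ x ∂μ, Tendsto (fun i => f i x) l (𝓝 (g x))) (hM : ∀ i, ∫⁻ x, f i x ∂μ ≤ M) :
    ∫⁻ x, g x ∂μ ≤ M :=
  calc ∫⁻ x, g x ∂μ = ∫⁻ x, liminf (fun i => f i x) l ∂μ :=
        lintegral_congr_ae (hlim.mono fun _ hx => hx.liminf_eq.symm)
    _ ≤ liminf (fun i => ∫⁻ x, f i x ∂μ) l := lintegral_liminf_le' hf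
    _ ≤ M := liminf_le_of_frequently_le' (Frequently.of_forall hM)

theorem integrable_max_zero_of_lintegral_ofReal_ne_top {f : α → ℝ}
    (hf : AEStronglyMeasurable f μ) (h : ∫⁻ x, ENNReal.ofReal (f x) ∂μ ≠ ∞) :
    Integrable (fun x => max (f x) 0) μ := by
  have hmax : AEStronglyMeasurable (fun x => max (f x) 0) μ := hf.sup aestronglyMeasurable_const
  refine (lintegral_ofReal_ne_top_iff_integrable hmax (ae_of_all _ fun _ => le_max_right _ _)).mp ?_
  simpa using h

end Integration

theorem stmt_5_general {n : ℕ} (p : ℝ) (hp : 1 < p) (hpn : p < (n : ℝ))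
    (F : ℝ → ℝ) (hF : Continuous F)
    (hgrowth : ∀ c > (0 : ℝ), ∃ r₁ r₂ : ℝ, 0 < r₁ ∧ r₁ < r₂ ∧
      ∀ s : ℝ, (|s| ≤ r₁ ∨ r₂ ≤ |s|) →
        max (F s) 0 ≤ c * |s| ^ ((n : ℝ) * p / ((n : ℝ) - p)))
    (uh : ℕ → EuclideanSpace ℝ (Fin n) → ℝ)
    (hm : ∀ h, AEMeasurable (uh h) volume)
    (C : ℝ≥0∞) (hC : C < ⊤)
    (hbdd : ∀ h, eLpNorm (uh h) (ENNReal.ofReal ((n : ℝ) * p / ((n : ℝ) - p))) volume ≤ C)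
    (hFL1 : ∀ h, Integrable (fun x => F (uh h x)) volume)
    (hint1 : ∀ h, (∫ x, F (uh h x)) = 1)
    (u : EuclideanSpace ℝ (Fin n) → ℝ)
    (hae : ∀ᵐ x ∂(volume : Measure (EuclideanSpace ℝ (Fin n))),
      Filter.Tendsto (fun h => uh h x) Filter.atTop (nhds (u x))) :
    Integrable (fun x => max (F (u x)) 0) volume ∧
    Integrable (fun x => max (-(F (u x))) 0) volume ∧
    Integrable (fun x => F (u x)) volume := by
  set q : ℝ := (n : ℝ) * p / ((n : ℝ) - p)
  have hq : 0 < q := div_pos (by nlinarith) (by linarith)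
  obtain ⟨r₁, r₂, hr₁, -, hgr⟩ := hgrowth 1 one_pos
  obtain ⟨K, hK⟩ := hF.exists_le_mul_rpow_abs hq.le hr₁ fun s hs =>
    (le_max_left _ _).trans ((hgr s hs).trans_eq (one_mul _))
  have hM : (K : ℝ≥0∞) * C ^ q ≠ ∞ :=
    ENNReal.mul_ne_top ENNReal.coe_ne_top (ENNReal.rpow_ne_top_of_nonneg hq.le hC.ne)
  have posPart_le (v : EuclideanSpace ℝ (Fin n) → ℝ)
      (hv : eLpNorm v (ENNReal.ofReal q) volume ≤ C) :
      ∫⁻ x, ENNReal.ofReal (F (v x)) ≤ K * C ^ q :=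
    (lintegral_ofReal_comp_le_mul_eLpNorm_rpow hq hK v).trans (by gcongr)
  have hu : AEMeasurable u volume := aemeasurable_of_tendsto_metrizable_ae atTop hm hae
  have hu_bdd : eLpNorm u (ENNReal.ofReal q) volume ≤ C :=
    Lp.eLpNorm_le_of_ae_tendsto (Eventually.of_forall hbdd)
      (fun h => (hm h).aestronglyMeasurable) hae
  have negPart_le : ∫⁻ x, ENNReal.ofReal (-F (u x)) ≤ K * C ^ q := by
    have hcont : Continuous fun s => ENNReal.ofReal (-F s) := ENNReal.continuous_ofReal.comp hF.neg
    refine lintegral_le_of_tendsto_ae (fun h => hcont.measurable.comp_aemeasurable (hm h))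
      (hae.mono fun x hx => (hcont.tendsto _).comp hx) fun h => ?_
    exact (lintegral_ofReal_neg_le_of_integral_nonneg (hFL1 h) (hint1 h ▸ zero_le_one)).trans
      (posPart_le _ (hbdd h))
  have hFu : AEStronglyMeasurable (fun x => F (u x)) volume :=
    (hF.measurable.comp_aemeasurable hu).aestronglyMeasurable
  have hpos := integrable_max_zero_of_lintegral_ofReal_ne_top hFu
    ((posPart_le u hu_bdd).trans_lt hM.lt_top).ne
  have hneg := integrable_max_zero_of_lintegral_ofReal_ne_top hFu.neg
    (negPart_le.trans_lt hM.lt_top).ne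
  exact ⟨hpos, hneg,
    (hpos.sub hneg).congr (ae_of_all _ fun _ => max_zero_sub_max_neg_zero_eq_self _)⟩

theorem stmt_5 {n : ℕ} (hn : 0 < n) (p : ℝ) (hp : 1 < p) (hpn : p < (n : ℝ))
    (F : ℝ → ℝ) (hF : Continuous F) (hF0 : F 0 = 0)
    (hgrowth : ∀ c > (0 : ℝ), ∃ r₁ r₂ : ℝ, 0 < r₁ ∧ r₁ < r₂ ∧
      ∀ s : ℝ, (|s| ≤ r₁ ∨ r₂ ≤ |s|) →
        max (F s) 0 ≤ c * |s| ^ ((n : ℝ) * p / ((n : ℝ) - p)))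
    (uh : ℕ → EuclideanSpace ℝ (Fin n) → ℝ)
    (hm : ∀ h, AEMeasurable (uh h) volume)
    (C : ℝ≥0∞) (hC : C < ⊤)
    (hbdd : ∀ h, eLpNorm (uh h) (ENNReal.ofReal ((n : ℝ) * p / ((n : ℝ) - p))) volume ≤ C)
    (hFL1 : ∀ h, Integrable (fun x => F (uh h x)) volume)
    (hint1 : ∀ h, (∫ x, F (uh h x)) = 1)
    (u : EuclideanSpace ℝ (Fin n) → ℝ)
    (hae : ∀ᵐ x ∂(volume : Measure (EuclideanSpace ℝ (Fin n))),
      Filter.Tendsto (fun h => uh h x) Filter.atTop (nhds (u x))) :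
    Integrable (fun x => max (F (u x)) 0) volume ∧
    Integrable (fun x => max (-(F (u x))) 0) volume ∧
    Integrable (fun x => F (u x)) volume :=
  stmt_5_general p hp hpn F hF hgrowth uh hm C hC hbdd hFL1 hint1 u hae
end

section
/- Let Λ : [0,∞) → [0,∞) be C¹ with Λ(t) = λ for t ≤ 1, Λ(t) = 1 for t ≥ r, ρ := inf Λ > 1/2, and sup|Λ'| < ρ/r. Define Π : ℝⁿ → ℝⁿ by Π(x) = Λ(|x|)x. Then |Π(x)| ≥ ρ|x| for all x ∈ ℝⁿ, and Π is a bijection of ℝⁿ onto itself. -/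
/-!
Write `f t = t * Λ t`, so that `‖Λ ‖x‖ • x‖ = f ‖x‖`. On `(0, r]` the derivative
`f' t = Λ t + t Λ' t` is positive because `t |Λ' t| < t ρ / r ≤ ρ ≤ Λ t`, and beyond `r` it is
`Λ t = 1`; hence `f` is a strictly increasing bijection of `[0, ∞)`. The map `x ↦ Λ ‖x‖ • x`
preserves rays through the origin and acts on them by `f`, so it is a bijection.
-/

open Set Filter Topology

section RadialMap

variable {E : Type*} [NormedAddCommGroup E] [NormedSpace ℝ E] {Λ : ℝ → ℝ}

lemma norm_smul_radial (hΛ : ∀ t, 0 ≤ t → 0 < Λ t) (x : E) :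
    ‖Λ ‖x‖ • x‖ = ‖x‖ * Λ ‖x‖ := by
  rw [norm_smul, Real.norm_eq_abs, abs_of_pos (hΛ _ (norm_nonneg x)), mul_comm]

lemma injective_smul_radial (hΛ : ∀ t, 0 ≤ t → 0 < Λ t)
    (hmono : StrictMonoOn (fun t => t * Λ t) (Ici 0)) :
    Function.Injective (fun x : E => Λ ‖x‖ • x) := by
  intro x y hxy
  have hnorm : ‖x‖ = ‖y‖ := hmono.injOn (norm_nonneg x) (norm_nonneg y) <| by
    simpa only [norm_smul_radial hΛ] using congrArg norm hxy
  simp only [hnorm] at hxy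
  exact smul_right_injective E (hΛ _ (norm_nonneg y)).ne' hxy

lemma surjective_smul_radial (hsurj : SurjOn (fun t => t * Λ t) (Ici 0) (Ici 0)) :
    Function.Surjective (fun x : E => Λ ‖x‖ • x) := by
  intro y
  rcases eq_or_ne y 0 with rfl | hy
  · exact ⟨0, smul_zero _⟩
  have hy' : 0 < ‖y‖ := norm_pos_iff.mpr hy
  obtain ⟨s, hs, hfs⟩ := hsurj (norm_nonneg y)
  have hnorm : ‖(s / ‖y‖) • y‖ = s := by
    rw [norm_smul, Real.norm_eq_abs, abs_of_nonneg (div_nonneg hs hy'.le),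
      div_mul_cancel₀ _ hy'.ne']
  refine ⟨(s / ‖y‖) • y, ?_⟩
  have hfs' : s * Λ s = ‖y‖ := hfs
  have hscalar : Λ s * (s / ‖y‖) = 1 := by
    rw [mul_div_assoc', mul_comm, hfs', div_self hy'.ne']
  simp only [hnorm, smul_smul, hscalar, one_smul]

end RadialMap

section RadialProfile

variable {Λ : ℝ → ℝ} {r ρ : ℝ}

lemma strictMonoOn_mul_self_Ici (hΛ : Differentiable ℝ Λ) (hρ0 : 0 < ρ) (hr : 0 < r)
    (hone : ∀ t, r ≤ t → Λ t = 1) (hρ : ∀ t, 0 ≤ t → ρ ≤ Λ t)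
    (hd : ∀ t, 0 ≤ t → |deriv Λ t| < ρ / r) :
    StrictMonoOn (fun t => t * Λ t) (Ici 0) := by
  refine strictMonoOn_of_deriv_pos (convex_Ici 0)
    (differentiable_id.mul hΛ).continuous.continuousOn fun t ht => ?_
  rw [interior_Ici, mem_Ioi] at ht
  rw [deriv_fun_mul differentiableAt_fun_id (hΛ t), deriv_id'', one_mul]
  rcases le_or_gt t r with htr | hrt
  · have hslope : t * (ρ / r) ≤ ρ := by
      calc t * (ρ / r) ≤ r * (ρ / r) := by gcongr
        _ = ρ := mul_div_cancel₀ ρ hr.ne'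
    have hderiv : -(t * (ρ / r)) < t * deriv Λ t := by
      have := (abs_lt.mp (hd t ht.le)).1
      nlinarith
    linarith [hρ t ht.le]
  · have hflat : Λ =ᶠ[𝓝 t] fun _ => 1 :=
      eventually_of_mem (Ioi_mem_nhds hrt) fun s hs => hone s (le_of_lt hs)
    rw [hflat.deriv_eq, deriv_const, hone t hrt.le]
    norm_num

lemma surjOn_mul_self_Ici (hΛ : Continuous Λ) (hone : ∀ t, r ≤ t → Λ t = 1) :
    SurjOn (fun t => t * Λ t) (Ici 0) (Ici 0) := by
  intro c hc
  have hT : max r c * Λ (max r c) = max r c := by rw [hone _ (le_max_left r c), mul_one]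
  obtain ⟨s, hs, hfs⟩ := intermediate_value_Icc (le_max_of_le_right (mem_Ici.mp hc))
    (continuous_id.mul hΛ).continuousOn
    (show c ∈ Icc (0 * Λ 0) (max r c * Λ (max r c)) from
      ⟨by rw [zero_mul]; exact hc, by rw [hT]; exact le_max_right r c⟩)
  exact ⟨s, hs.1, hfs⟩

end RadialProfile

theorem stmt_9_general {n : ℕ} (r ρ : ℝ) (hr : 1 < r)
    (Λ : ℝ → ℝ) (hC1 : ContDiff ℝ 1 Λ)
    (h2 : ∀ t : ℝ, r ≤ t → Λ t = 1)
    (hρ : ∀ t : ℝ, 0 ≤ t → ρ ≤ Λ t) (hρhalf : 1 / 2 < ρ)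
    (hd : ∀ t : ℝ, 0 ≤ t → |deriv Λ t| < ρ / r) :
    (∀ x : EuclideanSpace ℝ (Fin n), ρ * ‖x‖ ≤ ‖Λ ‖x‖ • x‖) ∧
    Function.Bijective (fun x : EuclideanSpace ℝ (Fin n) => Λ ‖x‖ • x) := by
  have hρ0 : 0 < ρ := by linarith
  have hΛpos : ∀ t, 0 ≤ t → 0 < Λ t := fun t ht => hρ0.trans_le (hρ t ht)
  have hΛ : Differentiable ℝ Λ := hC1.differentiable one_ne_zero
  refine ⟨fun x => ?_, injective_smul_radial hΛpos ?_, surjective_smul_radial ?_⟩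
  · rw [norm_smul_radial hΛpos, mul_comm]
    exact mul_le_mul_of_nonneg_left (hρ _ (norm_nonneg x)) (norm_nonneg x)
  · exact strictMonoOn_mul_self_Ici hΛ hρ0 (by linarith) h2 hρ hd
  · exact surjOn_mul_self_Ici hΛ.continuous h2

theorem stmt_9 {n : ℕ} (hn : 0 < n) (lam r ρ : ℝ) (hlam : 0 < lam) (hr : 1 < r)
    (Λ : ℝ → ℝ) (hC1 : ContDiff ℝ 1 Λ)
    (h1 : ∀ t : ℝ, 0 ≤ t → t ≤ 1 → Λ t = lam)
    (h2 : ∀ t : ℝ, r ≤ t → Λ t = 1)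
    (hρ : ∀ t : ℝ, 0 ≤ t → ρ ≤ Λ t) (hρhalf : 1 / 2 < ρ)
    (hd : ∀ t : ℝ, 0 ≤ t → |deriv Λ t| < ρ / r) :
    (∀ x : EuclideanSpace ℝ (Fin n), ρ * ‖x‖ ≤ ‖Λ ‖x‖ • x‖) ∧
    Function.Bijective (fun x : EuclideanSpace ℝ (Fin n) => Λ ‖x‖ • x) :=
  stmt_9_general r ρ hr Λ hC1 h2 hρ hρhalf hd
end

section
/- Let u ∈ C¹(ℝⁿ) ∩ D^{1,p}(ℝⁿ) be a weak solution of −div(∇_ξ L(u,Du)) + ∂_s L(u,Du) = 0 in 𝒟'(ℝⁿ), where L(s,ξ) is C¹ and ξ ↦ L(s,ξ) is p-homogeneous, and assume L(u,Du) ∈ L¹(ℝⁿ) and ∇_ξ L(u,Du)·Du ∈ L¹(ℝⁿ). If the Pucci–Serrin identity Σ_{i,j} ∫ D_i h^j (∂_{ξ_i}L)(u,Du) D_j u − ∫ (div h) L(u,Du) = 0 holds for every h ∈ C_c¹(ℝⁿ,ℝⁿ), then choosing h_k(x) = T(x/k)x with T ∈ C_c¹(ℝⁿ), T ≡ 1 on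 the unit ball, T ≡ 0 outside the ball of radius 2, and letting k → ∞ yields ∫_{ℝⁿ} [n L(u,Du) − ∇_ξ L(u,Du)·Du] = 0. -/
open MeasureTheory
open scoped RealInnerProductSpace

open Metric in
noncomputable def bumpT (n : ℕ) : ContDiffBump (0 : EuclideanSpace ℝ (Fin n)) :=
  ⟨1, 2, one_pos, one_lt_two⟩

noncomputable def dT (n : ℕ) : EuclideanSpace ℝ (Fin n) → (EuclideanSpace ℝ (Fin n) →L[ℝ] ℝ) :=
  fderiv ℝ (bumpT n)

lemma dT_continuous (n : ℕ) : Continuous (dT n) := by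
  unfold dT
  exact ((bumpT n).contDiff (n := 1)).continuous_fderiv (by simp)

lemma dT_compactSupport (n : ℕ) : HasCompactSupport (dT n) := by
  unfold dT
  exact (bumpT n).hasCompactSupport.fderiv (𝕜 := ℝ)

lemma dT_in {n : ℕ} (y : EuclideanSpace ℝ (Fin n)) (hy : ‖y‖ < 1) : dT n y = 0 := by
  have h1 : (⇑(bumpT n)) =ᶠ[nhds y] fun _ => (1 : ℝ) :=
    (bumpT n).eventuallyEq_one_of_mem_ball (by
      simp only [Metric.mem_ball, dist_zero_right]; exact hy)
  rw [dT, h1.fderiv_eq]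
  exact fderiv_const_apply 1

lemma dT_out {n : ℕ} (y : EuclideanSpace ℝ (Fin n)) (hy : 2 < ‖y‖) : dT n y = 0 := by
  have h1 : (⇑(bumpT n)) =ᶠ[nhds y] fun _ => (0 : ℝ) := by
    have hopen : IsOpen {z : EuclideanSpace ℝ (Fin n) | 2 < ‖z‖} :=
      isOpen_lt continuous_const continuous_norm
    filter_upwards [hopen.mem_nhds hy] with z hz
    exact (bumpT n).zero_of_le_dist (by simp only [dist_zero_right]; exact hz.le)
  rw [dT, h1.fderiv_eq]
  exact fderiv_const_apply 0

noncomputable def hvf (n : ℕ) (c : ℝ) (x : EuclideanSpace ℝ (Fin n)) : EuclideanSpace ℝ (Fin n) :=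
  bumpT n (c • x) • x

noncomputable def Dvf (n : ℕ) (c : ℝ) (x : EuclideanSpace ℝ (Fin n)) :
    EuclideanSpace ℝ (Fin n) →L[ℝ] EuclideanSpace ℝ (Fin n) :=
  bumpT n (c • x) • ContinuousLinearMap.id ℝ _ + (c • dT n (c • x)).smulRight x

lemma hvf_contDiff (n : ℕ) (c : ℝ) : ContDiff ℝ 1 (hvf n c) := by
  unfold hvf
  exact (((bumpT n).contDiff).comp (contDiff_const_smul c)).smul contDiff_id

lemma hvf_hasFDerivAt (n : ℕ) (c : ℝ) (x : EuclideanSpace ℝ (Fin n)) :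
    HasFDerivAt (hvf n c) (Dvf n c x) x := by
  have hA : HasFDerivAt (fun y : EuclideanSpace ℝ (Fin n) => bumpT n (c • y))
      (c • dT n (c • x)) x := by
    have h1 := (((bumpT n).contDiff (n := 1)).differentiable (by simp) (c • x)).hasFDerivAt
    have h2 : HasFDerivAt (fun y : EuclideanSpace ℝ (Fin n) => c • y)
        (c • ContinuousLinearMap.id ℝ _) x := (hasFDerivAt_id x).const_smul c
    have h3 := h1.comp x h2
    have e : c • dT n (c • x) = (fderiv ℝ (bumpT n) (c • x)).comp (c • ContinuousLinearMap.id ℝ _) := by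
      ext v
      simp [dT]
    rw [e]; exact h3
  exact hA.smul (hasFDerivAt_id x)

lemma Dvf_apply (n : ℕ) (c : ℝ) (x v : EuclideanSpace ℝ (Fin n)) (j : Fin n) :
    Dvf n c x v j = bumpT n (c • x) * v j + (c * dT n (c • x) v) * x j := by
  simp [Dvf, ContinuousLinearMap.smulRight_apply, smul_eq_mul, mul_assoc]

lemma hvf_fderiv (n : ℕ) (c : ℝ) (x : EuclideanSpace ℝ (Fin n)) :
    fderiv ℝ (hvf n c) x = Dvf n c x := (hvf_hasFDerivAt n c x).fderiv

lemma hvf_support (n : ℕ) (c : ℝ) (hc : 0 < c) : HasCompactSupport (hvf n c) := by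
  apply HasCompactSupport.intro (isCompact_closedBall (0 : EuclideanSpace ℝ (Fin n)) (2 / c))
  intro x hx
  simp only [Metric.mem_closedBall, dist_zero_right, not_le] at hx
  have h2 : (2 : ℝ) ≤ ‖c • x‖ := by
    rw [norm_smul, Real.norm_eq_abs, abs_of_pos hc]
    rw [div_lt_iff₀ hc] at hx
    nlinarith
  have h0 : bumpT n (c • x) = 0 := (bumpT n).zero_of_le_dist (by
    simp only [dist_zero_right]; exact h2)
  simp [hvf, h0]

lemma coord_abs_le {n : ℕ} (x : EuclideanSpace ℝ (Fin n)) (i : Fin n) : |x i| ≤ ‖x‖ := by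
  have h : x i = ⟪EuclideanSpace.single i (1:ℝ), x⟫ := by
    rw [EuclideanSpace.inner_single_left]; simp
  rw [h]
  calc |⟪EuclideanSpace.single i (1:ℝ), x⟫| ≤ ‖EuclideanSpace.single i (1:ℝ)‖ * ‖x‖ :=
        abs_real_inner_le_norm _ _
    _ = ‖x‖ := by rw [EuclideanSpace.norm_single]; simp

lemma eucl_sum_single {n : ℕ} (x : EuclideanSpace ℝ (Fin n)) :
    x = ∑ i, x i • EuclideanSpace.single i (1:ℝ) := by
  ext j
  have h : (∑ i, x i • EuclideanSpace.single i (1:ℝ)) j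
      = ∑ i, (x i • EuclideanSpace.single i (1:ℝ)) j := by
    rw [WithLp.ofLp_sum]; exact Finset.sum_apply j Finset.univ _
  rw [h]
  simp [EuclideanSpace.single_apply]

lemma clm_apply_sum {n : ℕ} (f : EuclideanSpace ℝ (Fin n) →L[ℝ] ℝ)
    (x : EuclideanSpace ℝ (Fin n)) :
    f x = ∑ i, x i * f (EuclideanSpace.single i 1) := by
  conv_lhs => rw [eucl_sum_single x]
  rw [map_sum]
  simp [smul_eq_mul]

lemma inner_sum_eq {n : ℕ} (x y : EuclideanSpace ℝ (Fin n)) : ⟪x, y⟫ = ∑ i, x i * y i := by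
  simp [PiLp.inner_apply, RCLike.inner_apply]
  exact Finset.sum_congr rfl fun i _ => mul_comm _ _

lemma key1 {n : ℕ} (c : ℝ) (x g d : EuclideanSpace ℝ (Fin n)) :
    (∑ i, ∑ j, (Dvf n c x (EuclideanSpace.single i 1) j) * g i * d j)
    = bumpT n (c • x) * ⟪g, d⟫ + (c * dT n (c • x) g) * ⟪x, d⟫ := by
  have hterm : ∀ i j : Fin n, (Dvf n c x (EuclideanSpace.single i 1) j) * g i * d j
      = (if j = i then bumpT n (c • x) * (g i * d j) else 0)
        + (c * (g i * dT n (c • x) (EuclideanSpace.single i 1))) * (x j * d j) := by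
    intro i j
    rw [Dvf_apply, EuclideanSpace.single_apply]
    by_cases h : j = i <;> simp [h] <;> ring
  simp only [hterm, Finset.sum_add_distrib, Finset.sum_ite_eq', Finset.mem_univ, if_true]
  rw [inner_sum_eq g d, inner_sum_eq x d, clm_apply_sum (dT n (c • x)) g]
  congr 1
  · rw [Finset.mul_sum]
  · rw [Finset.mul_sum, Finset.sum_comm]
    refine Finset.sum_congr rfl fun j _ => ?_
    rw [Finset.mul_sum, Finset.sum_mul]

lemma key2 {n : ℕ} (c : ℝ) (x : EuclideanSpace ℝ (Fin n)) :
    (∑ i, Dvf n c x (EuclideanSpace.single i 1) i)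
    = n * bumpT n (c • x) + c * dT n (c • x) x := by
  have hterm : ∀ i : Fin n, Dvf n c x (EuclideanSpace.single i 1) i
      = bumpT n (c • x) + c * (x i * dT n (c • x) (EuclideanSpace.single i 1)) := by
    intro i
    rw [Dvf_apply, EuclideanSpace.single_apply]
    simp; ring
  simp only [hterm, Finset.sum_add_distrib, Finset.sum_const, Finset.card_univ,
    Fintype.card_fin, nsmul_eq_mul]
  congr 1
  rw [clm_apply_sum (dT n (c • x)) x, Finset.mul_sum]

lemma Dvf_coord_continuous (n : ℕ) (c : ℝ) (i j : Fin n) :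
    Continuous fun x => Dvf n c x (EuclideanSpace.single i 1) j := by
  simp only [Dvf_apply]
  apply Continuous.add
  · exact (((bumpT n).continuous).comp (continuous_const_smul c)).mul continuous_const
  · refine (continuous_const.mul ?_).mul ?_
    · exact ((dT_continuous n).comp (continuous_const_smul c)).clm_apply continuous_const
    · exact (EuclideanSpace.proj j : EuclideanSpace ℝ (Fin n) →L[ℝ] ℝ).continuous

lemma dT_apply_le {n : ℕ} (y v : EuclideanSpace ℝ (Fin n)) :
    |dT n y v| ≤ ‖dT n y‖ * ‖v‖ := by
  rw [← Real.norm_eq_abs]; exact (dT n y).le_opNorm v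

lemma bound_a {n : ℕ} (cv : ℝ) (hc : 0 ≤ cv) (x : EuclideanSpace ℝ (Fin n)) {M : ℝ}
    (hkey : cv * ‖x‖ * ‖dT n (cv • x)‖ ≤ 2 * M) (i j : Fin n) :
    |(cv * dT n (cv • x) (EuclideanSpace.single i 1)) * x j| ≤ 2 * M := by
  rw [abs_mul, abs_mul, abs_of_nonneg hc]
  have e3 : |dT n (cv • x) (EuclideanSpace.single i 1)| ≤ ‖dT n (cv • x)‖ := by
    have h := dT_apply_le (cv • x) (EuclideanSpace.single i (1:ℝ))
    rwa [EuclideanSpace.norm_single, norm_one, mul_one] at h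
  have e4 := coord_abs_le x j
  calc cv * |dT n (cv • x) (EuclideanSpace.single i 1)| * |x j|
      ≤ cv * ‖dT n (cv • x)‖ * ‖x‖ := by
        apply mul_le_mul (mul_le_mul_of_nonneg_left e3 hc) e4 (abs_nonneg _) (by positivity)
    _ = cv * ‖x‖ * ‖dT n (cv • x)‖ := by ring
    _ ≤ 2 * M := hkey

lemma bound_c {n : ℕ} (cv : ℝ) (hc : 0 ≤ cv) (x : EuclideanSpace ℝ (Fin n)) {M : ℝ}
    (hkey : cv * ‖x‖ * ‖dT n (cv • x)‖ ≤ 2 * M) :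
    |cv * dT n (cv • x) x| ≤ 2 * M := by
  rw [abs_mul, abs_of_nonneg hc]
  calc cv * |dT n (cv • x) x| ≤ cv * (‖dT n (cv • x)‖ * ‖x‖) :=
        mul_le_mul_of_nonneg_left (dT_apply_le _ _) hc
    _ = cv * ‖x‖ * ‖dT n (cv • x)‖ := by ring
    _ ≤ 2 * M := hkey

lemma bound_b {n : ℕ} (cv : ℝ) (hc : 0 ≤ cv) (x g d : EuclideanSpace ℝ (Fin n)) {M : ℝ}
    (hkey : cv * ‖x‖ * ‖dT n (cv • x)‖ ≤ 2 * M) :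
    |cv * dT n (cv • x) g * ⟪x, d⟫| ≤ 2 * M * (‖g‖ * ‖d‖) := by
  rw [abs_mul, abs_mul, abs_of_nonneg hc]
  calc cv * |dT n (cv • x) g| * |⟪x, d⟫|
      ≤ cv * (‖dT n (cv • x)‖ * ‖g‖) * (‖x‖ * ‖d‖) := by
        apply mul_le_mul (mul_le_mul_of_nonneg_left (dT_apply_le _ _) hc)
          (abs_real_inner_le_norm x d) (abs_nonneg _) (by positivity)
    _ = (cv * ‖x‖ * ‖dT n (cv • x)‖) * (‖g‖ * ‖d‖) := by ring
    _ ≤ 2 * M * (‖g‖ * ‖d‖) :=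
        mul_le_mul_of_nonneg_right hkey (by positivity)

set_option maxHeartbeats 2000000 in
theorem stmt_12 {n : ℕ} (hn : 0 < n) (p : ℝ) (hp : 1 < p) (hpn : p ≤ (n : ℝ))
    (L : ℝ → EuclideanSpace ℝ (Fin n) → ℝ)
    (gL : ℝ → EuclideanSpace ℝ (Fin n) → EuclideanSpace ℝ (Fin n))
    (Ls : ℝ → EuclideanSpace ℝ (Fin n) → ℝ)
    (hL : ContDiff ℝ 1 fun q : ℝ × EuclideanSpace ℝ (Fin n) => L q.1 q.2)
    (hgL : ∀ (s : ℝ) (ξ : EuclideanSpace ℝ (Fin n)), HasGradientAt (L s) (gL s ξ) ξ)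
    (hLs : ∀ (s : ℝ) (ξ : EuclideanSpace ℝ (Fin n)),
      HasDerivAt (fun t => L t ξ) (Ls s ξ) s)
    (hhom : ∀ (s t : ℝ) (ξ : EuclideanSpace ℝ (Fin n)), 0 < t →
      L s (t • ξ) = t ^ p * L s ξ)
    (u : EuclideanSpace ℝ (Fin n) → ℝ)
    (Du : EuclideanSpace ℝ (Fin n) → EuclideanSpace ℝ (Fin n))
    (hu : ContDiff ℝ 1 u) (hDu : ∀ x, HasGradientAt u (Du x) x)
    (hweak : ∀ φ : EuclideanSpace ℝ (Fin n) → ℝ, ContDiff ℝ (⊤ : ℕ∞) φ → HasCompactSupport φ →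
      (∫ x, ⟪gL (u x) (Du x), gradient φ x⟫) + ∫ x, Ls (u x) (Du x) * φ x = 0)
    (hint1 : Integrable (fun x => L (u x) (Du x)) volume)
    (hint2 : Integrable (fun x => ‖gL (u x) (Du x)‖ * ‖Du x‖) volume)
    (hPS : ∀ h : EuclideanSpace ℝ (Fin n) → EuclideanSpace ℝ (Fin n),
      ContDiff ℝ 1 h → HasCompactSupport h →
      (∑ i : Fin n, ∑ j : Fin n,
        ∫ x, (fderiv ℝ h x (EuclideanSpace.single i 1) j) *
          (gL (u x) (Du x) i) * (Du x j))
      - (∫ x, (∑ i : Fin n, fderiv ℝ h x (EuclideanSpace.single i 1) i) *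
          L (u x) (Du x)) = 0) :
    ∫ x, ((n : ℝ) * L (u x) (Du x) - ⟪gL (u x) (Du x), Du x⟫) = 0 := by
  classical
  -- continuity of Du
  have hDuc : Continuous Du := by
    have h1 : Du = fun x => (InnerProductSpace.toDual ℝ (EuclideanSpace ℝ (Fin n))).symm
        (fderiv ℝ u x) := by
      funext x
      rw [(hDu x).hasFDerivAt.fderiv]
      simp
    rw [h1]
    exact (InnerProductSpace.toDual ℝ _).symm.continuous.comp (hu.continuous_fderiv one_ne_zero)
  -- continuity of the gradient composition
  have hGc : Continuous (fun x => gL (u x) (Du x)) := by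
    set J : EuclideanSpace ℝ (Fin n) →L[ℝ] ℝ × EuclideanSpace ℝ (Fin n) :=
      (0 : EuclideanSpace ℝ (Fin n) →L[ℝ] ℝ).prod (ContinuousLinearMap.id ℝ _) with hJ
    have key : ∀ s ξ, gL s ξ = (InnerProductSpace.toDual ℝ _).symm
        ((fderiv ℝ (fun q : ℝ × EuclideanSpace ℝ (Fin n) => L q.1 q.2) (s, ξ)).comp J) := by
      intro s ξ
      have h1 : HasFDerivAt (L s) ((InnerProductSpace.toDual ℝ _) (gL s ξ)) ξ :=
        (hgL s ξ).hasFDerivAt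
      have hj : HasFDerivAt (fun ξ' : EuclideanSpace ℝ (Fin n) => ((s, ξ') : ℝ × _)) J ξ :=
        HasFDerivAt.prodMk (hasFDerivAt_const s ξ) (hasFDerivAt_id ξ)
      have h2 : HasFDerivAt (fun ξ' => L s ξ')
          ((fderiv ℝ (fun q : ℝ × EuclideanSpace ℝ (Fin n) => L q.1 q.2) (s, ξ)).comp J) ξ :=
        ((hL.differentiable one_ne_zero (s, ξ)).hasFDerivAt).comp ξ hj
      have h3 := h1.unique h2
      rw [← h3]
      simp
    have heq : (fun x => gL (u x) (Du x)) = fun x => (InnerProductSpace.toDual ℝ _).symm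
        ((fderiv ℝ (fun q : ℝ × EuclideanSpace ℝ (Fin n) => L q.1 q.2) (u x, Du x)).comp J) := by
      funext x; rw [key]
    rw [heq]
    exact (InnerProductSpace.toDual ℝ _).symm.continuous.comp
      (((hL.continuous_fderiv one_ne_zero).comp (hu.continuous.prodMk hDuc)).clm_comp
        continuous_const)
  have hlc : Continuous (fun x => L (u x) (Du x)) :=
    hL.continuous.comp (hu.continuous.prodMk hDuc)
  -- bound on the bump derivative
  obtain ⟨M, hM⟩ := (dT_compactSupport n).exists_bound_of_continuous (dT_continuous n)
  have hM0 : 0 ≤ M := le_trans (norm_nonneg _) (hM 0)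
  set c : ℕ → ℝ := fun k => ((k : ℝ) + 1)⁻¹ with hcdef
  have hcpos : ∀ k, 0 < c k := fun k => by positivity
  have hkey : ∀ (k : ℕ) (x : EuclideanSpace ℝ (Fin n)),
      c k * ‖x‖ * ‖dT n (c k • x)‖ ≤ 2 * M := by
    intro k x
    have hc := (hcpos k).le
    have hnorm : ‖c k • x‖ = c k * ‖x‖ := by
      rw [norm_smul, Real.norm_eq_abs, abs_of_nonneg hc]
    rcases le_or_gt ‖c k • x‖ 2 with h | h
    · rw [hnorm] at h
      have h2 : ‖dT n (c k • x)‖ ≤ M := hM _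
      nlinarith [norm_nonneg (dT n (c k • x)), mul_nonneg hc (norm_nonneg x)]
    · rw [dT_out _ h]
      simp only [norm_zero, mul_zero]
      positivity
  have hT1 : ∀ y : EuclideanSpace ℝ (Fin n), |bumpT n y| ≤ 1 := fun y =>
    abs_le.mpr ⟨by linarith [(bumpT n).nonneg' y], (bumpT n).le_one⟩
  -- the rescaled Pucci-Serrin identities
  have hPS' : ∀ k : ℕ, (∫ x, ((bumpT n (c k • x) * ⟪gL (u x) (Du x), Du x⟫
        + (c k * dT n (c k • x) (gL (u x) (Du x))) * ⟪x, Du x⟫)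
      - ((n : ℝ) * bumpT n (c k • x) + c k * dT n (c k • x) x) * L (u x) (Du x))) = 0 := by
    intro k
    have Ek := hPS (hvf n (c k)) (hvf_contDiff n (c k)) (hvf_support n (c k) (hcpos k))
    simp only [hvf_fderiv] at Ek
    have hintij : ∀ i j : Fin n, Integrable (fun x =>
        (Dvf n (c k) x (EuclideanSpace.single i 1) j) * gL (u x) (Du x) i * Du x j) volume := by
      intro i j
      refine (hint2.const_mul (1 + 2 * M)).mono' ?_ ?_
      · exact (((Dvf_coord_continuous n (c k) i j).mul
          ((EuclideanSpace.proj i).continuous.comp hGc)).mul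
          ((EuclideanSpace.proj j).continuous.comp hDuc)).aestronglyMeasurable
      · refine Filter.Eventually.of_forall fun x => ?_
        rw [Real.norm_eq_abs, abs_mul, abs_mul]
        have hb : |Dvf n (c k) x (EuclideanSpace.single i 1) j| ≤ 1 + 2 * M := by
          rw [Dvf_apply]
          have e1 := hT1 (c k • x)
          have e2 : |(EuclideanSpace.single i (1:ℝ)) j| ≤ 1 := by
            rw [EuclideanSpace.single_apply]; split <;> simp
          have e5 := bound_a (c k) (hcpos k).le x (hkey k x) i j
          calc |bumpT n (c k • x) * (EuclideanSpace.single i (1:ℝ)) j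
              + (c k * dT n (c k • x) (EuclideanSpace.single i 1)) * x j|
              ≤ |bumpT n (c k • x) * (EuclideanSpace.single i (1:ℝ)) j|
                + |(c k * dT n (c k • x) (EuclideanSpace.single i 1)) * x j| := abs_add_le _ _
            _ ≤ 1 + 2 * M := by
                rw [abs_mul]
                have := mul_le_mul e1 e2 (abs_nonneg _) (by linarith [abs_nonneg (bumpT n (c k • x))])
                simp only [mul_one] at this
                linarith
        calc |Dvf n (c k) x (EuclideanSpace.single i 1) j| * |gL (u x) (Du x) i| * |Du x j|
            ≤ (1 + 2 * M) * ‖gL (u x) (Du x)‖ * ‖Du x‖ := by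
              apply mul_le_mul (mul_le_mul hb (coord_abs_le _ i) (abs_nonneg _)
                (by linarith)) (coord_abs_le _ j) (abs_nonneg _) (by positivity)
          _ = (1 + 2 * M) * (‖gL (u x) (Du x)‖ * ‖Du x‖) := by ring
    have hS1 : (∑ i : Fin n, ∑ j : Fin n,
        ∫ x, (Dvf n (c k) x (EuclideanSpace.single i 1) j) * gL (u x) (Du x) i * Du x j)
        = ∫ x, (bumpT n (c k • x) * ⟪gL (u x) (Du x), Du x⟫
            + (c k * dT n (c k • x) (gL (u x) (Du x))) * ⟪x, Du x⟫) := by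
      calc (∑ i : Fin n, ∑ j : Fin n,
          ∫ x, (Dvf n (c k) x (EuclideanSpace.single i 1) j) * gL (u x) (Du x) i * Du x j)
          = ∑ i : Fin n, ∫ x, ∑ j : Fin n,
              (Dvf n (c k) x (EuclideanSpace.single i 1) j) * gL (u x) (Du x) i * Du x j :=
            Finset.sum_congr rfl fun i _ => (integral_finset_sum _ fun j _ => hintij i j).symm
        _ = ∫ x, ∑ i : Fin n, ∑ j : Fin n,
              (Dvf n (c k) x (EuclideanSpace.single i 1) j) * gL (u x) (Du x) i * Du x j :=
            (integral_finset_sum _ fun i _ =>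
              integrable_finset_sum _ fun j _ => hintij i j).symm
        _ = _ := integral_congr_ae (Filter.Eventually.of_forall fun x => key1 (c k) x _ _)
    have hS2 : (∫ x, (∑ i : Fin n, Dvf n (c k) x (EuclideanSpace.single i 1) i)
          * L (u x) (Du x))
        = ∫ x, ((n : ℝ) * bumpT n (c k • x) + c k * dT n (c k • x) x) * L (u x) (Du x) :=
      integral_congr_ae (Filter.Eventually.of_forall fun x => by simp only [key2])
    rw [hS1, hS2] at Ek
    have hPint : Integrable (fun x => bumpT n (c k • x) * ⟪gL (u x) (Du x), Du x⟫
        + (c k * dT n (c k • x) (gL (u x) (Du x))) * ⟪x, Du x⟫) volume := by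
      refine (hint2.const_mul (1 + 2 * M)).mono' ?_ ?_
      · exact ((((bumpT n).continuous.comp (continuous_const_smul (c k))).mul
          (hGc.inner hDuc)).add
          ((continuous_const.mul (((dT_continuous n).comp
            (continuous_const_smul (c k))).clm_apply hGc)).mul
            (continuous_id.inner hDuc))).aestronglyMeasurable
      · refine Filter.Eventually.of_forall fun x => ?_
        rw [Real.norm_eq_abs]
        have e1 : |bumpT n (c k • x) * ⟪gL (u x) (Du x), Du x⟫|
            ≤ ‖gL (u x) (Du x)‖ * ‖Du x‖ := by
          rw [abs_mul]
          have h2 := abs_real_inner_le_norm (gL (u x) (Du x)) (Du x)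
          have := mul_le_mul (hT1 (c k • x)) h2 (abs_nonneg _) zero_le_one
          simpa using this
        have e2 := bound_b (c k) (hcpos k).le x (gL (u x) (Du x)) (Du x) (hkey k x)
        calc |bumpT n (c k • x) * ⟪gL (u x) (Du x), Du x⟫
            + (c k * dT n (c k • x) (gL (u x) (Du x))) * ⟪x, Du x⟫|
            ≤ |bumpT n (c k • x) * ⟪gL (u x) (Du x), Du x⟫|
              + |c k * dT n (c k • x) (gL (u x) (Du x)) * ⟪x, Du x⟫| := abs_add_le _ _
          _ ≤ ‖gL (u x) (Du x)‖ * ‖Du x‖ + 2 * M * (‖gL (u x) (Du x)‖ * ‖Du x‖) := by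
              linarith
          _ = (1 + 2 * M) * (‖gL (u x) (Du x)‖ * ‖Du x‖) := by ring
    have hQint : Integrable (fun x => ((n : ℝ) * bumpT n (c k • x)
        + c k * dT n (c k • x) x) * L (u x) (Du x)) volume := by
      refine (hint1.abs.const_mul ((n : ℝ) + 2 * M)).mono' ?_ ?_
      · exact (((continuous_const.mul ((bumpT n).continuous.comp
          (continuous_const_smul (c k)))).add
          (continuous_const.mul (((dT_continuous n).comp
            (continuous_const_smul (c k))).clm_apply continuous_id))).mul
          hlc).aestronglyMeasurable
      · refine Filter.Eventually.of_forall fun x => ?_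
        rw [Real.norm_eq_abs, abs_mul]
        have e3 : |(n : ℝ) * bumpT n (c k • x) + c k * dT n (c k • x) x| ≤ (n : ℝ) + 2 * M := by
          have e4 := bound_c (c k) (hcpos k).le x (hkey k x)
          have e5 : |(n : ℝ) * bumpT n (c k • x)| ≤ (n : ℝ) := by
            rw [abs_mul, abs_of_nonneg (by positivity : (0:ℝ) ≤ (n:ℝ))]
            have := mul_le_mul_of_nonneg_left (hT1 (c k • x)) (by positivity : (0:ℝ) ≤ (n:ℝ))
            simpa using this
          calc |(n : ℝ) * bumpT n (c k • x) + c k * dT n (c k • x) x|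
              ≤ |(n : ℝ) * bumpT n (c k • x)| + |c k * dT n (c k • x) x| := abs_add_le _ _
            _ ≤ (n : ℝ) + 2 * M := by linarith
        exact mul_le_mul_of_nonneg_right e3 (abs_nonneg _) |>.trans_eq (by ring)
    rw [← integral_sub hPint hQint] at Ek
    exact Ek
  -- dominated convergence
  have hlim := MeasureTheory.tendsto_integral_of_dominated_convergence
    (μ := volume)
    (F := fun (k : ℕ) x => (bumpT n (c k • x) * ⟪gL (u x) (Du x), Du x⟫
        + (c k * dT n (c k • x) (gL (u x) (Du x))) * ⟪x, Du x⟫)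
      - ((n : ℝ) * bumpT n (c k • x) + c k * dT n (c k • x) x) * L (u x) (Du x))
    (f := fun x => ⟪gL (u x) (Du x), Du x⟫ - (n : ℝ) * L (u x) (Du x))
    (fun x => (1 + 2 * M) * (‖gL (u x) (Du x)‖ * ‖Du x‖)
      + ((n : ℝ) + 2 * M) * |L (u x) (Du x)|)
    (fun k => ((((bumpT n).continuous.comp (continuous_const_smul (c k))).mul
          (hGc.inner hDuc)).add
          ((continuous_const.mul (((dT_continuous n).comp
            (continuous_const_smul (c k))).clm_apply hGc)).mul
            (continuous_id.inner hDuc))).sub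
        ((((continuous_const.mul ((bumpT n).continuous.comp
          (continuous_const_smul (c k)))).add
          (continuous_const.mul (((dT_continuous n).comp
            (continuous_const_smul (c k))).clm_apply continuous_id))).mul
          hlc)) |>.aestronglyMeasurable)
    ((hint2.const_mul (1 + 2 * M)).add (hint1.abs.const_mul ((n : ℝ) + 2 * M)))
    (fun k => Filter.Eventually.of_forall fun x => by
      rw [Real.norm_eq_abs]
      have e1 : |bumpT n (c k • x) * ⟪gL (u x) (Du x), Du x⟫
          + (c k * dT n (c k • x) (gL (u x) (Du x))) * ⟪x, Du x⟫|
          ≤ (1 + 2 * M) * (‖gL (u x) (Du x)‖ * ‖Du x‖) := by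
        have ea : |bumpT n (c k • x) * ⟪gL (u x) (Du x), Du x⟫|
            ≤ ‖gL (u x) (Du x)‖ * ‖Du x‖ := by
          rw [abs_mul]
          have h2 := abs_real_inner_le_norm (gL (u x) (Du x)) (Du x)
          have := mul_le_mul (hT1 (c k • x)) h2 (abs_nonneg _) zero_le_one
          simpa using this
        have eb := bound_b (c k) (hcpos k).le x (gL (u x) (Du x)) (Du x) (hkey k x)
        calc |bumpT n (c k • x) * ⟪gL (u x) (Du x), Du x⟫
            + (c k * dT n (c k • x) (gL (u x) (Du x))) * ⟪x, Du x⟫|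
            ≤ |bumpT n (c k • x) * ⟪gL (u x) (Du x), Du x⟫|
              + |c k * dT n (c k • x) (gL (u x) (Du x)) * ⟪x, Du x⟫| := abs_add_le _ _
          _ ≤ (1 + 2 * M) * (‖gL (u x) (Du x)‖ * ‖Du x‖) := by linarith
      have e2 : |((n : ℝ) * bumpT n (c k • x) + c k * dT n (c k • x) x) * L (u x) (Du x)|
          ≤ ((n : ℝ) + 2 * M) * |L (u x) (Du x)| := by
        rw [abs_mul]
        have e4 := bound_c (c k) (hcpos k).le x (hkey k x)
        have e5 : |(n : ℝ) * bumpT n (c k • x)| ≤ (n : ℝ) := by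
          rw [abs_mul, abs_of_nonneg (by positivity : (0:ℝ) ≤ (n:ℝ))]
          have := mul_le_mul_of_nonneg_left (hT1 (c k • x)) (by positivity : (0:ℝ) ≤ (n:ℝ))
          simpa using this
        have e3 : |(n : ℝ) * bumpT n (c k • x) + c k * dT n (c k • x) x| ≤ (n : ℝ) + 2 * M := by
          calc |(n : ℝ) * bumpT n (c k • x) + c k * dT n (c k • x) x|
              ≤ |(n : ℝ) * bumpT n (c k • x)| + |c k * dT n (c k • x) x| := abs_add_le _ _
            _ ≤ (n : ℝ) + 2 * M := by linarith
        exact mul_le_mul_of_nonneg_right e3 (abs_nonneg _)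
      calc |(bumpT n (c k • x) * ⟪gL (u x) (Du x), Du x⟫
          + (c k * dT n (c k • x) (gL (u x) (Du x))) * ⟪x, Du x⟫)
          - ((n : ℝ) * bumpT n (c k • x) + c k * dT n (c k • x) x) * L (u x) (Du x)|
          ≤ |bumpT n (c k • x) * ⟪gL (u x) (Du x), Du x⟫
              + (c k * dT n (c k • x) (gL (u x) (Du x))) * ⟪x, Du x⟫|
            + |((n : ℝ) * bumpT n (c k • x) + c k * dT n (c k • x) x) * L (u x) (Du x)| :=
            abs_sub _ _
        _ ≤ (1 + 2 * M) * (‖gL (u x) (Du x)‖ * ‖Du x‖)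
            + ((n : ℝ) + 2 * M) * |L (u x) (Du x)| := by linarith)
    (Filter.Eventually.of_forall fun x => by
      have hev : ∀ᶠ k in Filter.atTop,
          (bumpT n (c k • x) * ⟪gL (u x) (Du x), Du x⟫
            + (c k * dT n (c k • x) (gL (u x) (Du x))) * ⟪x, Du x⟫)
          - ((n : ℝ) * bumpT n (c k • x) + c k * dT n (c k • x) x) * L (u x) (Du x)
          = ⟪gL (u x) (Du x), Du x⟫ - (n : ℝ) * L (u x) (Du x) := by
        rw [Filter.eventually_atTop]
        refine ⟨⌈‖x‖⌉₊, fun k hk => ?_⟩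
        have h1 : c k * ‖x‖ < 1 := by
          have hx1 : ‖x‖ < (k : ℝ) + 1 := by
            calc ‖x‖ ≤ (⌈‖x‖⌉₊ : ℝ) := Nat.le_ceil _
              _ ≤ (k : ℝ) := by exact_mod_cast hk
              _ < (k : ℝ) + 1 := by linarith
          rw [hcdef]
          rw [inv_mul_lt_one₀] <;> try positivity
          exact hx1
        have hnorm : ‖c k • x‖ < 1 := by
          rw [norm_smul, Real.norm_eq_abs, abs_of_nonneg (hcpos k).le]
          exact h1
        have hT : bumpT n (c k • x) = 1 := (bumpT n).one_of_mem_closedBall (by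
          simp only [Metric.mem_closedBall, dist_zero_right]
          exact hnorm.le)
        have hdT0 : dT n (c k • x) = 0 := dT_in _ hnorm
        rw [hT, hdT0]
        simp only [ContinuousLinearMap.zero_apply, mul_zero, zero_mul, add_zero, mul_one]
        ring
      exact Filter.Tendsto.congr'
        (by filter_upwards [hev] with k hk; exact hk.symm) tendsto_const_nhds)
  have h0 : (∫ x, (⟪gL (u x) (Du x), Du x⟫ - (n : ℝ) * L (u x) (Du x))) = 0 :=
    tendsto_nhds_unique (hlim.congr fun k => hPS' k ▸ rfl) tendsto_const_nhds
  have hfin : (fun x => (n : ℝ) * L (u x) (Du x) - ⟪gL (u x) (Du x), Du x⟫)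
      = fun x => -((⟪gL (u x) (Du x), Du x⟫ - (n : ℝ) * L (u x) (Du x))) :=
    funext fun x => by ring
  rw [hfin, integral_neg, h0, neg_zero]
end
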